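/- arXiv:1906.07694 — 4 statements merged into one kernel-verified Lean document; each statement's English description precedes it below -/
import Mathlib

section
/- Every DS-surjection of arity k and degree m satisfies m ≤ k − 1. (In other words, the cells of highest dimension of the cacti complex 𝒞_k have dimension k − 1.) -/
/-!
Call a position `p` *repeated* if its value occurs again later. There are at most `k` non-repeated
positions, one per value. If `p` is repeated, the value at `p + 1` is new, i.e. it does not occur
at or before `p`: an earlier occurrence `q < p` would give the forbidden pattern
`f q, f p, f (p + 1), f r` with `r` a later occurrence of `f p`. Hence `p ↦ f (p + 1)` is
injective on repeated positions and misses the value at the smallest one, so there are at most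
`k - 1` repeated positions. Altogether `m + k ≤ 2k - 1`, the Davenport–Schinzel bound for
order-2 sequences.
-/

/-- A DS-surjection of arity `k` and degree `m`: a surjective map
`f : {1,…,m+k} → {1,…,k}` (encoded with 0-indexed `Fin`s) such that
(i) consecutive values differ, and (ii) there are no indices `a < b < c < d`
with `f a = f c ≠ f b = f d` (the complexity condition). These index the
`m`-dimensional cells of the cacti complex `𝒞_k`. -/
def IsDSSurjection (k m : ℕ) (f : Fin (m + k) → Fin k) : Prop :=
  Function.Surjective f ∧
  (∀ a : ℕ, ∀ ha : a + 1 < m + k, f ⟨a, by omega⟩ ≠ f ⟨a + 1, ha⟩) ∧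
  ¬∃ a b c d : Fin (m + k), a < b ∧ b < c ∧ c < d ∧ f a = f c ∧ f b = f d ∧ f a ≠ f b

open Finset Order

section DavenportSchinzel

variable {ι α : Type*} [LinearOrder ι]

theorem card_filter_not_exists_lt_apply_eq_le [Fintype ι] [DecidableEq α] [Fintype α]
    (f : ι → α) :
    #{p | ¬∃ q, p < q ∧ f q = f p} ≤ Fintype.card α := by
  refine card_le_card_of_injOn f (fun _ _ ↦ mem_univ _) fun p hp p' hp' hpp' ↦ ?_
  replace hp := (mem_filter.1 (mem_coe.1 hp)).2
  replace hp' := (mem_filter.1 (mem_coe.1 hp')).2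
  rcases lt_trichotomy p p' with h | h | h
  exacts [(hp ⟨p', h, hpp'.symm⟩).elim, h, (hp' ⟨p, h, hpp'⟩).elim]

variable [SuccOrder ι] {f : ι → α}

theorem apply_ne_apply_succ_of_le (hadj : ∀ p q, p ⋖ q → f p ≠ f q)
    (hcplx : ¬∃ a b c d : ι, a < b ∧ b < c ∧ c < d ∧ f a = f c ∧ f b = f d ∧ f a ≠ f b)
    {p : ι} (hp : ∃ r, p < r ∧ f r = f p) {q : ι} (hqp : q ≤ p) : f q ≠ f (succ p) := by
  obtain ⟨r, hpr, hr⟩ := hp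
  have hcov : p ⋖ succ p := covBy_succ_of_not_isMax hpr.not_isMax
  have hne : f p ≠ f (succ p) := hadj _ _ hcov
  have hsr : succ p < r := (succ_le_of_lt hpr).lt_of_ne fun h ↦ hne (h ▸ hr).symm
  intro hq
  have hqp' : q < p := hqp.lt_of_ne fun h ↦ hne (h ▸ hq)
  exact hcplx ⟨q, p, succ p, r, hqp', hcov.lt, hsr, hq, hr.symm, hq ▸ hne.symm⟩

theorem card_filter_exists_lt_apply_eq_le [Fintype ι] [DecidableEq α] [Fintype α]
    (hadj : ∀ p q, p ⋖ q → f p ≠ f q)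
    (hcplx : ¬∃ a b c d : ι, a < b ∧ b < c ∧ c < d ∧ f a = f c ∧ f b = f d ∧ f a ≠ f b) :
    #{p | ∃ q, p < q ∧ f q = f p} ≤ Fintype.card α - 1 := by
  set T : Finset ι := {p | ∃ q, p < q ∧ f q = f p}
  have hrep : ∀ {p}, p ∈ T → ∃ r, p < r ∧ f r = f p := fun hp ↦ (mem_filter.1 hp).2
  rcases T.eq_empty_or_nonempty with hT | hT
  · simp [hT]
  have hlt : ∀ {p p'}, p ∈ T → p' ∈ T → p < p' → f (succ p) ≠ f (succ p') :=
    fun _ hp' h ↦ apply_ne_apply_succ_of_le hadj hcplx (hrep hp') (succ_le_of_lt h)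
  calc #T ≤ #(univ.erase (f (T.min' hT))) := by
        refine card_le_card_of_injOn (fun p ↦ f (succ p)) (fun p hp ↦ ?_) fun p hp p' hp' h ↦ ?_
        · exact mem_erase.2
            ⟨(apply_ne_apply_succ_of_le hadj hcplx (hrep hp) (T.min'_le p hp)).symm, mem_univ _⟩
        · by_contra hne
          rcases lt_or_gt_of_ne hne with hpp' | hpp'
          exacts [hlt hp hp' hpp' h, hlt hp' hp hpp' h.symm]
    _ = Fintype.card α - 1 := by rw [card_erase_of_mem (mem_univ _), card_univ]

theorem card_le_two_mul_card_sub_one [Fintype ι] [Fintype α] (hadj : ∀ p q, p ⋖ q → f p ≠ f q)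
    (hcplx : ¬∃ a b c d : ι, a < b ∧ b < c ∧ c < d ∧ f a = f c ∧ f b = f d ∧ f a ≠ f b) :
    Fintype.card ι ≤ 2 * Fintype.card α - 1 := by
  classical
  have hsplit := card_filter_add_card_filter_not (s := univ) fun p ↦ ∃ q, p < q ∧ f q = f p
  have hrep := card_filter_exists_lt_apply_eq_le hadj hcplx
  have hlast := card_filter_not_exists_lt_apply_eq_le f
  rw [card_univ] at hsplit
  omega

end DavenportSchinzel

theorem IsDSSurjection.apply_ne_of_covBy {k m : ℕ} {f : Fin (m + k) → Fin k}
    (hf : IsDSSurjection k m f) (p q : Fin (m + k)) (hpq : p ⋖ q) : f p ≠ f q := by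
  have hq : (q : ℕ) = p + 1 := (Nat.covBy_iff_add_one_eq.1 (Fin.covBy_iff.1 hpq)).symm
  have := hf.2.1 p (hq ▸ q.isLt)
  rwa [show (⟨p + 1, _⟩ : Fin (m + k)) = q from Fin.ext hq.symm] at this

theorem degree_le_arity_sub_one_general (k m : ℕ)
    (f : Fin (m + k) → Fin k) (hf : IsDSSurjection k m f) :
    m ≤ k - 1 := by
  have := card_le_two_mul_card_sub_one hf.apply_ne_of_covBy hf.2.2
  simp only [Fintype.card_fin] at this
  omega

/-- Every DS-surjection of arity `k ≥ 1` and degree `m` satisfies `m ≤ k - 1`. -/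
theorem degree_le_arity_sub_one (k m : ℕ) (hk : 1 ≤ k)
    (f : Fin (m + k) → Fin k) (hf : IsDSSurjection k m f) :
    m ≤ k - 1 :=
  degree_le_arity_sub_one_general k m f hf
end

section
/- Let f be a DS-surjection of arity k and degree m, let j ∈ {1,…,k} with |f⁻¹(j)| ≥ 2, and let x ∈ f⁻¹(j). Then the map f̂ : {1,…,m+k−1} → {1,…,k} defined by f̂(i) = f(i) for i < x and f̂(i) = f(i+1) for i ≥ x (i.e., the sequence f(1)…f(m+k) with the occurrence of j at position x deleted) is a DS-surjection of arity k and degree m−1. (Well-definedness of the face operators ∂_i^{(j)} of the multi-semi-simplicial set underlying 𝒞_k.) -/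
section Words

variable {α : Type*} {n N : ℕ}

def NoAdjacentRepeats (g : Fin N → α) : Prop :=
  ∀ a : ℕ, ∀ ha : a + 1 < N, g ⟨a, by omega⟩ ≠ g ⟨a + 1, ha⟩

def HasCrossing (g : Fin N → α) : Prop :=
  ∃ a b c d : Fin N, a < b ∧ b < c ∧ c < d ∧ g a = g c ∧ g b = g d ∧ g a ≠ g b

theorem isDSSurjection_iff {k m : ℕ} {f : Fin (m + k) → Fin k} :
    IsDSSurjection k m f ↔ Function.Surjective f ∧ NoAdjacentRepeats f ∧ ¬HasCrossing f :=
  Iff.rfl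

theorem NoAdjacentRepeats.ne {g : Fin N → α} (hg : NoAdjacentRepeats g) {a b : Fin N}
    (hab : (a : ℕ) + 1 = b) : g a ≠ g b := by
  obtain ⟨b, hb⟩ := b
  subst hab
  exact hg a hb

theorem HasCrossing.of_comp {g : Fin N → α} {e : Fin n → Fin N} (he : StrictMono e)
    (h : HasCrossing (g ∘ e)) : HasCrossing g := by
  obtain ⟨a, b, c, d, hab, hbc, hcd, hac, hbd, hne⟩ := h
  exact ⟨e a, e b, e c, e d, he hab, he hbc, he hcd, hac, hbd, hne⟩

theorem mem_Ioo_of_not_hasCrossing {g : Fin N → α} (hg : ¬HasCrossing g) {a b c y : Fin N}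
    (hab : a < b) (hbc : b < c) (hac : g a = g c) (hba : g b ≠ g a) (hy : g y = g b) :
    y ∈ Set.Ioo a c := by
  have hya : y ≠ a := by rintro rfl; exact hba hy.symm
  have hyc : y ≠ c := by rintro rfl; exact hba (hy.symm.trans hac.symm)
  refine ⟨lt_of_le_of_ne (not_lt.mp fun hlt => hg ?_) hya.symm,
    lt_of_le_of_ne (not_lt.mp fun hlt => hg ?_) hyc⟩
  · exact ⟨y, a, b, c, hlt, hab, hbc, hy, hac, fun h => hba (hy.symm.trans h)⟩
  · exact ⟨a, b, c, y, hab, hbc, hlt, hac, hy.symm, hba.symm⟩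

variable {g : Fin N → α} {e : Fin n → Fin N} {p q : Fin N}

theorem surjective_comp_of_forall_ne_mem_range (hg : Function.Surjective g)
    (hcover : ∀ y ≠ p, y ∈ Set.range e) (hqp : q ≠ p) (hq : g q = g p) :
    Function.Surjective (g ∘ e) := by
  intro z
  obtain ⟨y, rfl⟩ := hg z
  by_cases hy : y = p
  · obtain ⟨i, hi⟩ := hcover q hqp
    exact ⟨i, by rw [Function.comp_apply, hi, hq, hy]⟩
  · obtain ⟨i, hi⟩ := hcover y hy
    exact ⟨i, by rw [Function.comp_apply, hi]⟩

theorem noAdjacentRepeats_comp_of_forall_ne_mem_range (he : StrictMono e)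
    (hcover : ∀ y ≠ p, y ∈ Set.range e) (hg : NoAdjacentRepeats g) (hcross : ¬HasCrossing g)
    (hqp : q ≠ p) (hq : g q = g p) : NoAdjacentRepeats (g ∘ e) := by
  intro a ha
  set i : Fin n := ⟨a, by omega⟩
  set i' : Fin n := ⟨a + 1, ha⟩
  have hlt : e i < e i' := he (Fin.mk_lt_mk.mpr a.lt_succ_self)
  by_cases hstep : (e i : ℕ) + 1 = e i'
  · exact hg.ne hstep
  have hgap : ∀ y, e i < y → y < e i' → y = p := by
    intro y h₁ h₂
    by_contra hyp
    obtain ⟨l, rfl⟩ := hcover y hyp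
    have h₁ := he.lt_iff_lt.mp h₁
    have h₂ := he.lt_iff_lt.mp h₂
    simp only [Fin.lt_def, i, i'] at h₁ h₂
    omega
  set mid : Fin N := ⟨e i + 1, by omega⟩
  have hmid_lt : e i < mid := Fin.lt_def.mpr (Nat.lt_succ_self _)
  have hlt_mid : mid < e i' := by
    change (e i : ℕ) + 1 < e i'
    rw [Fin.lt_def] at hlt
    omega
  have hmid : mid = p := hgap mid hmid_lt hlt_mid
  intro heq
  have hne : g mid ≠ g (e i) := (hg.ne rfl).symm
  obtain ⟨hq₁, hq₂⟩ := mem_Ioo_of_not_hasCrossing hcross hmid_lt hlt_mid heq hne (hmid ▸ hq)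
  exact hqp (hgap q hq₁ hq₂)

def skipIndex (x : Fin N) (h : n + 1 = N) (i : Fin n) : Fin N :=
  ⟨if (i : ℕ) < x then i else i + 1, by split_ifs <;> omega⟩

theorem strictMono_skipIndex (x : Fin N) (h : n + 1 = N) : StrictMono (skipIndex x h) := by
  intro a b hab
  simp only [skipIndex, Fin.lt_def] at hab ⊢
  split_ifs <;> omega

theorem mem_range_skipIndex {x y : Fin N} (h : n + 1 = N) (hy : y ≠ x) :
    y ∈ Set.range (skipIndex x h) := by
  have hy : (y : ℕ) ≠ x := Fin.val_ne_of_ne hy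
  refine ⟨⟨if (y : ℕ) < x then y else y - 1, by split_ifs <;> omega⟩, Fin.ext ?_⟩
  simp only [skipIndex]
  split_ifs <;> omega

end Words

/-- Well-definedness of the face operators of the multi-semi-simplicial set
underlying the cacti complex `𝒞_k`: if `f` is a DS-surjection of arity `k`
and degree `m`, `j` is a value whose fiber has at least two elements and
`x ∈ f⁻¹(j)`, then deleting the occurrence of `j` at position `x` from the
sequence `f(1)…f(m+k)` yields a DS-surjection of arity `k` and degree `m-1`. -/
theorem face_isDSSurjection (k m : ℕ) (f : Fin (m + k) → Fin k)
    (hf : IsDSSurjection k m f) (j : Fin k)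
    (hj : 2 ≤ (Finset.univ.filter fun i => f i = j).card)
    (x : Fin (m + k)) (hx : f x = j) :
    ∃ hm : 1 ≤ m, IsDSSurjection k (m - 1)
      (fun i : Fin (m - 1 + k) =>
        if (i : ℕ) < (x : ℕ) then f ⟨i, by have := i.isLt; omega⟩
        else f ⟨(i : ℕ) + 1, by have := i.isLt; omega⟩) := by
  obtain ⟨hsurj, hadj, hcross⟩ := isDSSurjection_iff.mp hf
  obtain ⟨q, hq, hqx⟩ := Finset.exists_mem_ne hj x
  replace hq : f q = f x := by rw [hx]; simpa using hq
  have hm : 1 ≤ m := by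
    have := Fintype.card_lt_of_surjective_not_injective f hsurj fun hinj => hqx (hinj hq)
    simp only [Fintype.card_fin] at this
    omega
  have hN : m - 1 + k + 1 = m + k := by omega
  have hcover : ∀ y ≠ x, y ∈ Set.range (skipIndex x hN) := fun _ => mem_range_skipIndex hN
  have hskip := strictMono_skipIndex x hN
  refine ⟨hm, ?_⟩
  convert isDSSurjection_iff.mpr
    ⟨surjective_comp_of_forall_ne_mem_range hsurj hcover hqx hq,
      noAdjacentRepeats_comp_of_forall_ne_mem_range hskip hcover hadj hcross hqx hq,
      fun h => hcross (HasCrossing.of_comp hskip h)⟩ using 1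
  funext i
  simp only [Function.comp_apply, skipIndex]
  split_ifs <;> rfl
end

section
/- Let f be a DS-surjection of arity k and degree m, and g a DS-surjection of arity h and degree n. Define the star product f ⋆ g : {1,…,(m+n)+(k+h)} → {1,…,k+h} by (f ⋆ g)(i) = f(i) for i ≤ m+k, and (f ⋆ g)(i) = g(i − m − k) + k for i > m+k. Then f ⋆ g is a DS-surjection of arity k+h and degree m+n, and the star product is associative: (f ⋆ g) ⋆ e = f ⋆ (g ⋆ e) for DS-surjections f, g, e. -/
/-- The star product of `f : {1,…,m+k} → {1,…,k}` and `g : {1,…,n+h} → {1,…,h}`: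
`(f ⋆ g)(i) = f(i)` for `i ≤ m+k` and `(f ⋆ g)(i) = g(i-m-k) + k` for `i > m+k`
(0-indexed encoding). -/
def starMap (k m h n : ℕ) (f : Fin (m + k) → Fin k) (g : Fin (n + h) → Fin h) :
    Fin (m + n + (k + h)) → Fin (k + h) := fun i =>
  if hi : (i : ℕ) < m + k then Fin.castAdd h (f ⟨i, hi⟩)
  else Fin.natAdd k (g ⟨(i : ℕ) - (m + k), by have := i.isLt; omega⟩)

/-!
On the first `m + k` positions `f ⋆ g` takes the values of `f`, all `< k`; on the remaining ones
it takes the values of `g` shifted by `k`, all `≥ k`. Equal values therefore lie in the same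
block, and since the blocks are intervals, a repeated neighbour or an `abab` pattern of `f ⋆ g`
lies inside one block, where it is a repeated neighbour or an `abab` pattern of `f` or of `g`.
The only adjacent pair straddling the two blocks has values on both sides of `k`.
Associativity is a pointwise comparison on the three blocks of `(f ⋆ g) ⋆ e`.
-/

open Function

section StarMap

variable {k m h n : ℕ} {f : Fin (m + k) → Fin k} {g : Fin (n + h) → Fin h}

theorem starMap_of_lt {i : Fin (m + n + (k + h))} (hi : (i : ℕ) < m + k) :
    starMap k m h n f g i = Fin.castAdd h (f ⟨i, hi⟩) :=
  dif_pos hi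

theorem starMap_of_le {i : Fin (m + n + (k + h))} (hi : m + k ≤ i) :
    starMap k m h n f g i = Fin.natAdd k (g ⟨i - (m + k), by have := i.isLt; omega⟩) :=
  dif_neg (by omega)

theorem val_starMap (i : Fin (m + n + (k + h))) :
    (starMap k m h n f g i : ℕ) =
      if hi : (i : ℕ) < m + k then (f ⟨i, hi⟩ : ℕ)
      else k + (g ⟨i - (m + k), by have := i.isLt; omega⟩ : ℕ) := by
  unfold starMap
  split_ifs <;> simp

theorem val_starMap_lt_iff (i : Fin (m + n + (k + h))) :
    (starMap k m h n f g i : ℕ) < k ↔ (i : ℕ) < m + k := by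
  rw [val_starMap]
  split_ifs with hi <;> simp [hi]

theorem lt_iff_lt_of_starMap_eq {i j : Fin (m + n + (k + h))}
    (hij : starMap k m h n f g i = starMap k m h n f g j) :
    (i : ℕ) < m + k ↔ (j : ℕ) < m + k := by
  rw [← val_starMap_lt_iff, ← val_starMap_lt_iff, hij]

theorem starMap_surjective (hf : Surjective f) (hg : Surjective g) :
    Surjective (starMap k m h n f g) := by
  refine Fin.addCases (fun y => ?_) (fun y => ?_)
  · obtain ⟨x, rfl⟩ := hf y
    exact ⟨⟨x, by omega⟩, starMap_of_lt x.isLt⟩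
  · obtain ⟨x, rfl⟩ := hg y
    refine ⟨⟨m + k + x, by omega⟩, ?_⟩
    rw [starMap_of_le (by simp)]
    simp

theorem starMap_ne_succ (hf : ∀ a (ha : a + 1 < m + k), f ⟨a, by omega⟩ ≠ f ⟨a + 1, ha⟩)
    (hg : ∀ a (ha : a + 1 < n + h), g ⟨a, by omega⟩ ≠ g ⟨a + 1, ha⟩) :
    ∀ a (ha : a + 1 < m + n + (k + h)),
      starMap k m h n f g ⟨a, by omega⟩ ≠ starMap k m h n f g ⟨a + 1, ha⟩ := by
  intro a ha heq
  by_cases hfirst : a + 1 < m + k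
  · rw [starMap_of_lt (by dsimp only; omega), starMap_of_lt hfirst, Fin.castAdd_inj] at heq
    exact hf a hfirst heq
  by_cases hsecond : m + k ≤ a
  · rw [starMap_of_le hsecond, starMap_of_le (by dsimp only; omega), Fin.natAdd_inj] at heq
    exact hg (a - (m + k)) (by omega) (heq.trans (congrArg g (Fin.ext (by dsimp only; omega))))
  have := lt_iff_lt_of_starMap_eq heq
  dsimp only at this
  omega

theorem starMap_not_abab
    (hf : ¬∃ a b c d : Fin (m + k), a < b ∧ b < c ∧ c < d ∧ f a = f c ∧ f b = f d ∧ f a ≠ f b)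
    (hg : ¬∃ a b c d : Fin (n + h), a < b ∧ b < c ∧ c < d ∧ g a = g c ∧ g b = g d ∧ g a ≠ g b) :
    ¬∃ a b c d : Fin (m + n + (k + h)), a < b ∧ b < c ∧ c < d ∧
      starMap k m h n f g a = starMap k m h n f g c ∧
      starMap k m h n f g b = starMap k m h n f g d ∧
      starMap k m h n f g a ≠ starMap k m h n f g b := by
  rintro ⟨a, b, c, d, hab, hbc, hcd, hac, hbd, hne⟩
  have hac' := lt_iff_lt_of_starMap_eq hac
  have hbd' := lt_iff_lt_of_starMap_eq hbd
  rw [Fin.lt_def] at hab hbc hcd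
  by_cases hc : (c : ℕ) < m + k
  · have ha : (a : ℕ) < m + k := by omega
    have hb : (b : ℕ) < m + k := by omega
    have hd := hbd'.mp hb
    rw [starMap_of_lt ha, starMap_of_lt hc, Fin.castAdd_inj] at hac
    rw [starMap_of_lt hb, starMap_of_lt hd, Fin.castAdd_inj] at hbd
    rw [starMap_of_lt ha, starMap_of_lt hb, Ne, Fin.castAdd_inj] at hne
    exact hf ⟨_, _, _, _, hab, hbc, hcd, hac, hbd, hne⟩
  · have ha : m + k ≤ (a : ℕ) := by omega
    have hb : m + k ≤ (b : ℕ) := by omega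
    have hd : m + k ≤ (d : ℕ) := by omega
    rw [starMap_of_le ha, starMap_of_le (not_lt.mp hc), Fin.natAdd_inj] at hac
    rw [starMap_of_le hb, starMap_of_le hd, Fin.natAdd_inj] at hbd
    rw [starMap_of_le ha, starMap_of_le hb, Ne, Fin.natAdd_inj] at hne
    exact hg ⟨_, _, _, _, Fin.mk_lt_mk.mpr (by omega), Fin.mk_lt_mk.mpr (by omega),
      Fin.mk_lt_mk.mpr (by omega), hac, hbd, hne⟩

theorem val_starMap_starMap {l p : ℕ} (e : Fin (p + l) → Fin l)
    (i : Fin (m + n + p + (k + h + l))) :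
    (starMap (k + h) (m + n) l p (starMap k m h n f g) e i : ℕ) =
      (starMap k m (h + l) (n + p) f (starMap h n l p g e) (Fin.cast (by ring) i) : ℕ) := by
  have hi := i.isLt
  simp only [val_starMap, Fin.val_cast]
  split_ifs <;> first
    | omega
    | rfl
    | have : e ⟨i - (m + n + (k + h)), by omega⟩ = e ⟨i - (m + k) - (n + h), by omega⟩ :=
        congrArg e (Fin.ext (by dsimp only; omega))
      omega

end StarMap

/-- The star product of a DS-surjection of arity `k`, degree `m` with one of
arity `h`, degree `n` is a DS-surjection of arity `k+h` and degree `m+n`, and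
the star product is associative (the two iterated star products take the same
value at corresponding indices). -/
theorem starMap_isDSSurjection_and_assoc (k m h n : ℕ)
    (f : Fin (m + k) → Fin k) (g : Fin (n + h) → Fin h)
    (hf : IsDSSurjection k m f) (hg : IsDSSurjection h n g) :
    IsDSSurjection (k + h) (m + n) (starMap k m h n f g) ∧
    (∀ (l p : ℕ) (e : Fin (p + l) → Fin l), IsDSSurjection l p e →
      ∀ i : Fin (m + n + p + (k + h + l)),
        ((starMap (k + h) (m + n) l p (starMap k m h n f g) e i : ℕ) =
          (starMap k m (h + l) (n + p) f (starMap h n l p g e)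
            (Fin.cast (by omega) i) : ℕ))) := by
  obtain ⟨hf_surj, hf_succ, hf_abab⟩ := hf
  obtain ⟨hg_surj, hg_succ, hg_abab⟩ := hg
  exact ⟨⟨starMap_surjective hf_surj hg_surj, starMap_ne_succ hf_succ hg_succ,
    starMap_not_abab hf_abab hg_abab⟩, fun _ _ e _ => val_starMap_starMap e⟩
end

section
/- Every open-cell datum of arity k ≥ 2 has dimension at most 2k − 3: if (𝒮, (f_S)) is a nested tree on k leaves with each vertex S labelled by a DS-surjection of arity val(S) and degree d_S, then Σ_{S∈𝒮} d_S + |𝒮| − 1 ≤ 2k − 3. (The open moduli space FM'_k has dimension 2k − 3, so the indexing combinatorial data can have dimension at most 2k − 3.) -/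
/-- A nested tree on `k` leaves. -/
def IsNestedTree (k : ℕ) (𝒮 : Finset (Finset (Fin k))) : Prop :=
  (∀ A ∈ 𝒮, 2 ≤ A.card) ∧ Finset.univ ∈ 𝒮 ∧
    ∀ A ∈ 𝒮, ∀ B ∈ 𝒮, Disjoint A B ∨ A ⊆ B ∨ B ⊆ A

/-- The maximal elements of `𝒮` properly contained in `S`. -/
def maximalBelow (k : ℕ) (𝒮 : Finset (Finset (Fin k))) (S : Finset (Fin k)) :
    Finset (Finset (Fin k)) :=
  𝒮.filter fun T => T ⊂ S ∧ ∀ U ∈ 𝒮, U ⊂ S → T ⊆ U → U = T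

/-- The elements of `S` not belonging to any element of `𝒮` properly contained in `S`. -/
def freeLeaves (k : ℕ) (𝒮 : Finset (Finset (Fin k))) (S : Finset (Fin k)) :
    Finset (Fin k) :=
  S.filter fun i => ∀ T ∈ 𝒮, T ⊂ S → i ∉ T

/-- The valence of a vertex `S` of a nested tree `𝒮`: the number of maximal
elements of `𝒮` properly contained in `S` plus the number of elements of `S`
not belonging to any element of `𝒮` properly contained in `S`. -/
def valence (k : ℕ) (𝒮 : Finset (Finset (Fin k))) (S : Finset (Fin k)) : ℕ :=
  (maximalBelow k 𝒮 S).card + (freeLeaves k 𝒮 S).card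

/-!
A vertex labelled by a DS-surjection of arity `v` and degree `d` carries a Davenport–Schinzel
sequence of order 2 on `v` letters, of length `d + v ≤ 2v - 1`; hence `d + 1 ≤ v`. Summing
over the tree, the valences count every non-root vertex (as a maximal child) and every
leaf (as a free leaf) at most once, so `Σ val S ≤ |𝒮| - 1 + k`. Together with `val S ≥ 2`
this gives `|𝒮| ≤ k - 1` and `Σ d S ≤ k - 1`.
-/

namespace List

variable {α : Type*}

/-- A Davenport–Schinzel sequence of order 2. -/
def IsDavenportSchinzel (l : List α) : Prop :=
  l.IsChain (· ≠ ·) ∧ ∀ x y, x ≠ y → ¬[x, y, x, y] <+ l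

theorem IsDavenportSchinzel.infix {l₁ l₂ : List α} (h : l₂.IsDavenportSchinzel)
    (h₁₂ : l₁ <:+: l₂) : l₁.IsDavenportSchinzel :=
  ⟨h.1.infix h₁₂, fun x y hxy hs => h.2 x y hxy (hs.trans h₁₂.sublist)⟩

theorem IsDavenportSchinzel.length_add_one_le [DecidableEq α] {l : List α}
    (h : l.IsDavenportSchinzel) (hne : l ≠ []) : l.length + 1 ≤ 2 * l.toFinset.card := by
  obtain ⟨a, t, rfl⟩ := exists_cons_of_ne_nil hne
  by_cases ha : a ∈ t
  -- Split at the second `a`; as `a y a y` is forbidden, `u` and `a :: w` share no letter.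
  · obtain ⟨u, w, hau, rfl, -⟩ := exists_erase_eq ha
    have hu : u ≠ [] := by
      rintro rfl
      exact (isChain_cons_cons.1 h.1).1 rfl
    have ihu := (h.infix ⟨[a], a :: w, by simp⟩).length_add_one_le hu
    have ihw := (h.infix (suffix_append (a :: u) (a :: w)).isInfix).length_add_one_le
      (cons_ne_nil a w)
    have hdisj : _root_.Disjoint u.toFinset (a :: w).toFinset := by
      refine Finset.disjoint_left.2 fun y hyu hyw => ?_
      simp only [mem_toFinset, mem_cons] at hyu hyw
      obtain rfl | hyw := hyw
      · exact hau hyu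
      · refine h.2 a y (fun hay => hau (hay ▸ hyu)) ?_
        exact ((singleton_sublist.2 hyu).append
          ((singleton_sublist.2 hyw).cons_cons a)).cons_cons a
    have hsupp : (a :: (u ++ a :: w)).toFinset = u.toFinset ∪ (a :: w).toFinset := by
      ext; simp only [mem_toFinset, mem_cons, mem_append, Finset.mem_union]; tauto
    rw [hsupp, Finset.card_union_of_disjoint hdisj]
    simp only [length_cons, length_append] at ihu ihw ⊢
    omega
  · obtain rfl | ht := eq_or_ne t []
    · simp
    have iht := (h.infix (suffix_cons a t).isInfix).length_add_one_le ht
    rw [toFinset_cons, Finset.card_insert_of_notMem (by simpa using ha), length_cons]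
    omega
termination_by l.length
decreasing_by all_goals (subst_vars; simp only [length_cons, length_append]; omega)

end List

theorem IsDSSurjection.isDavenportSchinzel_ofFn {v m : ℕ} {f : Fin (m + v) → Fin v}
    (hf : IsDSSurjection v m f) : (List.ofFn f).IsDavenportSchinzel := by
  obtain ⟨-, hadj, hcomplex⟩ := hf
  refine ⟨List.isChain_ofFn.2 hadj, fun x y hxy hs => hcomplex ?_⟩
  obtain ⟨e, he⟩ := List.sublist_iff_exists_fin_orderEmbedding_get_eq.1 hs
  have hval : ∀ i, f (Fin.cast List.length_ofFn (e i)) = [x, y, x, y].get i := fun i =>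
    (List.get_ofFn f (e i)).symm.trans (he i).symm
  refine ⟨Fin.cast List.length_ofFn (e 0), Fin.cast List.length_ofFn (e 1),
    Fin.cast List.length_ofFn (e 2), Fin.cast List.length_ofFn (e 3),
    e.strictMono (Fin.lt_def.2 (by simp)), e.strictMono (Fin.lt_def.2 (by simp)),
    e.strictMono (Fin.lt_def.2 (by simp)), ?_, ?_, ?_⟩
  · exact (hval 0).trans (hval 2).symm
  · exact (hval 1).trans (hval 3).symm
  · rwa [hval 0, hval 1]

theorem IsDSSurjection.degree_lt {v m : ℕ} {f : Fin (m + v) → Fin v} (hv : 0 < v)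
    (hf : IsDSSurjection v m f) : m < v := by
  have hne : List.ofFn f ≠ [] := by simp; omega
  have hsupp : (List.ofFn f).toFinset = Finset.univ :=
    Finset.eq_univ_of_forall fun x => by simpa [List.mem_ofFn] using hf.1 x
  have := hf.isDavenportSchinzel_ofFn.length_add_one_le hne
  rw [hsupp, Finset.card_univ, Fintype.card_fin, List.length_ofFn] at this
  omega

section NestedTree

variable {k : ℕ} {𝒮 : Finset (Finset (Fin k))} {S T : Finset (Fin k)}

theorem exists_mem_maximalBelow_superset (hT : T ∈ 𝒮) (hTS : T ⊂ S) :
    ∃ M ∈ maximalBelow k 𝒮 S, T ⊆ M := by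
  obtain ⟨M, hTM, hM⟩ := ({U ∈ 𝒮 | U ⊂ S} : Finset _).exists_le_maximal
    (Finset.mem_filter.2 ⟨hT, hTS⟩)
  obtain ⟨hM𝒮, hMS⟩ := Finset.mem_filter.1 hM.prop
  refine ⟨M, Finset.mem_filter.2 ⟨hM𝒮, hMS, fun U hU hUS hMU => ?_⟩, hTM⟩
  exact le_antisymm (hM.2 (Finset.mem_filter.2 ⟨hU, hUS⟩) hMU) hMU

theorem two_le_valence (hcard : ∀ A ∈ 𝒮, 2 ≤ A.card) (hS : S ∈ 𝒮) :
    2 ≤ valence k 𝒮 S := by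
  unfold valence
  by_cases hleaf : ∃ T ∈ 𝒮, T ⊂ S
  · obtain ⟨T, hT, hTS⟩ := hleaf
    obtain ⟨M, hM, -⟩ := exists_mem_maximalBelow_superset hT hTS
    obtain ⟨i, hiS, hiM⟩ := Finset.exists_of_ssubset (Finset.mem_filter.1 hM).2.1
    by_cases hfree : i ∈ freeLeaves k 𝒮 S
    · have := Finset.card_pos.2 ⟨M, hM⟩
      have := Finset.card_pos.2 ⟨i, hfree⟩
      omega
    · obtain ⟨U, hU, hUS, hiU⟩ : ∃ U ∈ 𝒮, U ⊂ S ∧ i ∈ U := by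
        simpa [freeLeaves, hiS] using hfree
      obtain ⟨M', hM', hUM'⟩ := exists_mem_maximalBelow_superset hU hUS
      have := Finset.one_lt_card.2 ⟨M, hM, M', hM', fun h => hiM (h ▸ hUM' hiU)⟩
      omega
  · push Not at hleaf
    have hfree : freeLeaves k 𝒮 S = S :=
      Finset.filter_true_of_mem fun i _ T hT hTS => absurd hTS (hleaf T hT)
    have := hcard S hS
    rw [hfree]
    omega

theorem pairwiseDisjoint_maximalBelow (h𝒮 : IsNestedTree k 𝒮) :
    (𝒮 : Set (Finset (Fin k))).PairwiseDisjoint (maximalBelow k 𝒮) := by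
  intro S hS S' hS' hne
  refine Finset.disjoint_left.2 fun T hT hT' => ?_
  obtain ⟨hT𝒮, hTS, hTmax⟩ := Finset.mem_filter.1 hT
  obtain ⟨-, hTS', hTmax'⟩ := Finset.mem_filter.1 hT'
  obtain ⟨i, hi⟩ := Finset.card_pos.1 (two_pos.trans_le (h𝒮.1 T hT𝒮))
  rcases h𝒮.2.2 S hS S' hS' with hdisj | hSS' | hS'S
  · exact Finset.disjoint_left.1 hdisj (hTS.1 hi) (hTS'.1 hi)
  · exact hTS.ne (hTmax' S hS (hSS'.lt_of_ne hne) hTS.1).symm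
  · exact hTS'.ne (hTmax S' hS' (hS'S.lt_of_ne hne.symm) hTS'.1).symm

theorem pairwiseDisjoint_freeLeaves
    (hnest : ∀ A ∈ 𝒮, ∀ B ∈ 𝒮, Disjoint A B ∨ A ⊆ B ∨ B ⊆ A) :
    (𝒮 : Set (Finset (Fin k))).PairwiseDisjoint (freeLeaves k 𝒮) := by
  intro S hS S' hS' hne
  refine Finset.disjoint_left.2 fun i hi hi' => ?_
  obtain ⟨hiS, hifree⟩ := Finset.mem_filter.1 hi
  obtain ⟨hiS', hifree'⟩ := Finset.mem_filter.1 hi'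
  rcases hnest S hS S' hS' with hdisj | hSS' | hS'S
  · exact Finset.disjoint_left.1 hdisj hiS hiS'
  · exact hifree' S hS (hSS'.lt_of_ne hne) hiS
  · exact hifree S' hS' (hS'S.lt_of_ne hne.symm) hiS'

theorem sum_card_maximalBelow_lt (h𝒮 : IsNestedTree k 𝒮) :
    ∑ S ∈ 𝒮, (maximalBelow k 𝒮 S).card < 𝒮.card := by
  have hsub : 𝒮.biUnion (maximalBelow k 𝒮) ⊆ 𝒮.erase Finset.univ := by
    intro T hT
    obtain ⟨S, -, hTS⟩ := Finset.mem_biUnion.1 hT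
    obtain ⟨hT𝒮, hTS, -⟩ := Finset.mem_filter.1 hTS
    exact Finset.mem_erase.2 ⟨fun hT => hTS.not_subset (hT ▸ S.subset_univ), hT𝒮⟩
  calc ∑ S ∈ 𝒮, (maximalBelow k 𝒮 S).card
      = (𝒮.biUnion (maximalBelow k 𝒮)).card :=
        (Finset.card_biUnion (pairwiseDisjoint_maximalBelow h𝒮)).symm
    _ ≤ (𝒮.erase Finset.univ).card := Finset.card_le_card hsub
    _ < 𝒮.card := Finset.card_erase_lt_of_mem h𝒮.2.1

theorem sum_card_freeLeaves_le
    (hnest : ∀ A ∈ 𝒮, ∀ B ∈ 𝒮, Disjoint A B ∨ A ⊆ B ∨ B ⊆ A) :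
    ∑ S ∈ 𝒮, (freeLeaves k 𝒮 S).card ≤ k := by
  rw [← Finset.card_biUnion (pairwiseDisjoint_freeLeaves hnest)]
  exact (Finset.card_le_univ _).trans_eq (Fintype.card_fin k)

theorem sum_valence_lt (h𝒮 : IsNestedTree k 𝒮) :
    ∑ S ∈ 𝒮, valence k 𝒮 S < 𝒮.card + k := by
  simp only [valence, Finset.sum_add_distrib]
  exact Nat.add_lt_add_of_lt_of_le (sum_card_maximalBelow_lt h𝒮)
    (sum_card_freeLeaves_le h𝒮.2.2)

end NestedTree

theorem openCell_dim_le_general (k : ℕ)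
    (𝒮 : Finset (Finset (Fin k))) (h𝒮 : IsNestedTree k 𝒮)
    (d : Finset (Fin k) → ℕ)
    (hlabel : ∀ S ∈ 𝒮, ∃ f : Fin (d S + valence k 𝒮 S) → Fin (valence k 𝒮 S),
      IsDSSurjection (valence k 𝒮 S) (d S) f) :
    (∑ S ∈ 𝒮, d S) + 𝒮.card - 1 ≤ 2 * k - 3 := by
  have hval : ∀ S ∈ 𝒮, 2 ≤ valence k 𝒮 S := fun S hS => two_le_valence h𝒮.1 hS
  have hdeg : ∑ S ∈ 𝒮, (d S + 1) ≤ ∑ S ∈ 𝒮, valence k 𝒮 S :=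
    Finset.sum_le_sum fun S hS => by
      obtain ⟨f, hf⟩ := hlabel S hS
      exact hf.degree_lt (by have := hval S hS; omega)
  have hcard : 𝒮.card * 2 ≤ ∑ S ∈ 𝒮, valence k 𝒮 S := by
    simpa using Finset.card_nsmul_le_sum 𝒮 _ 2 hval
  have hup := sum_valence_lt h𝒮
  rw [Finset.sum_add_distrib, Finset.sum_const, smul_eq_mul, mul_one] at hdeg
  omega

/-- Every open-cell datum of arity `k ≥ 2` has dimension at most `2k - 3`:
if `𝒮` is a nested tree on `k` leaves and each vertex `S ∈ 𝒮` is labelled by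
a DS-surjection of arity `valence 𝒮 S` and degree `d S`, then
`Σ_{S ∈ 𝒮} d S + |𝒮| - 1 ≤ 2k - 3`. -/
theorem openCell_dim_le (k : ℕ) (hk : 2 ≤ k)
    (𝒮 : Finset (Finset (Fin k))) (h𝒮 : IsNestedTree k 𝒮)
    (d : Finset (Fin k) → ℕ)
    (hlabel : ∀ S ∈ 𝒮, ∃ f : Fin (d S + valence k 𝒮 S) → Fin (valence k 𝒮 S),
      IsDSSurjection (valence k 𝒮 S) (d S) f) :
    (∑ S ∈ 𝒮, d S) + 𝒮.card - 1 ≤ 2 * k - 3 :=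
  openCell_dim_le_general k 𝒮 h𝒮 d hlabel
end
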